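/- arXiv:2506.17760 — 2 statements merged into one kernel-verified Lean document; each statement's English description precedes it below -/
import Mathlib

section
/- Let (Ω, 𝓕, ℙ) be a standard Borel probability space, let X : Ω → ℝ^d be measurable, let A, Z : Ω → {0,1} be measurable, and let Y, Y₁, Y₀ : Ω → ℝ be measurable random variables satisfying consistency: Y = A·Y₁ + (1−A)·Y₀ almost surely. If the triple (Y₁, Y₀, A) is conditionally independent of Z given the σ-algebra σ(X) generated by X, then Y is conditionally independent of Z given the σ-algebra σ(X, A) generated jointly by X and A. (This is Proposition 1 of the paper in the case X_s = X: if exposure A is conditionally exchangeable given X and Z is a negative control exposure, then the observed outcome Y is conditionally independent of Z given X and A.) -/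
/-!
Given `m`, a σ-algebra `m₁` is conditionally independent of `m₂` iff conditioning additionally on
`m₁` does not change `P(T | m)` for `T ∈ m₂`. This characterization yields the graphoid rule of weak
union: `(U, W) ⊥⊥ V | m` implies `W ⊥⊥ V | m ⊔ σ(U)`. By consistency `(A, Y)` is a.s. a measurable
function of `(Y₁, Y₀, A)`, so `(A, Y) ⊥⊥ Z | σ(X)`, and weak union moves `A` into the conditioning.
-/

open MeasureTheory ProbabilityTheory

namespace MeasurableSpace

variable {Ω : Type*}

lemma isPiSystem_image2_inter (m₁ m₂ : MeasurableSpace Ω) :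
    IsPiSystem (Set.image2 (· ∩ ·) {s | MeasurableSet[m₁] s} {s | MeasurableSet[m₂] s}) := by
  rintro _ ⟨a, ha, b, hb, rfl⟩ _ ⟨a', ha', b', hb', rfl⟩ -
  exact ⟨a ∩ a', ha.inter ha', b ∩ b', hb.inter hb', (Set.inter_inter_inter_comm a b a' b').symm⟩

lemma generateFrom_image2_inter (m₁ m₂ : MeasurableSpace Ω) :
    generateFrom (Set.image2 (· ∩ ·) {s | MeasurableSet[m₁] s} {s | MeasurableSet[m₂] s}) =
      m₁ ⊔ m₂ := by
  refine le_antisymm (generateFrom_le ?_) (sup_le (fun s hs ↦ ?_) (fun s hs ↦ ?_))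
  · rintro _ ⟨a, ha, b, hb, rfl⟩
    exact (le_sup_left (b := m₂) _ ha).inter (le_sup_right (a := m₁) _ hb)
  · exact measurableSet_generateFrom ⟨s, hs, Set.univ, .univ, Set.inter_univ s⟩
  · exact measurableSet_generateFrom ⟨Set.univ, .univ, s, hs, Set.univ_inter s⟩

end MeasurableSpace

namespace MeasureTheory

variable {Ω : Type*} {m m₀ : MeasurableSpace Ω} {μ : Measure Ω}

lemma setIntegral_eq_setIntegral_of_isPiSystem (hm : m ≤ m₀) {S : Set (Set Ω)}
    (h_gen : m = MeasurableSpace.generateFrom S) (h_pi : IsPiSystem S) {f g : Ω → ℝ}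
    (hf : Integrable f μ) (hg : Integrable g μ) (h_univ : ∫ x, f x ∂μ = ∫ x, g x ∂μ)
    (h_eq : ∀ t ∈ S, ∫ x in t, f x ∂μ = ∫ x in t, g x ∂μ) {t : Set Ω} (ht : MeasurableSet[m] t) :
    ∫ x in t, f x ∂μ = ∫ x in t, g x ∂μ := by
  induction t, ht using MeasurableSpace.induction_on_inter h_gen h_pi with
  | empty => simp
  | basic t ht => exact h_eq t ht
  | compl t ht ih =>
    have hf' := integral_add_compl (hm t ht) hf
    have hg' := integral_add_compl (hm t ht) hg
    linarith
  | iUnion F hdisj hF ih =>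
    rw [integral_iUnion (fun i ↦ hm _ (hF i)) hdisj hf.integrableOn,
      integral_iUnion (fun i ↦ hm _ (hF i)) hdisj hg.integrableOn]
    exact tsum_congr ih

lemma condExp_indicator_ae_eq_condExp_mul [IsFiniteMeasure μ] {g : Ω → ℝ}
    (hg : StronglyMeasurable[m] g) (hg_int : Integrable g μ) {C : Set Ω} (hC : MeasurableSet C) :
    μ[C.indicator g | m] =ᵐ[μ] μ⟦C | m⟧ * g := by
  have h_eq : C.indicator g = C.indicator (fun _ ↦ (1 : ℝ)) * g := by
    ext ω; by_cases hω : ω ∈ C <;> simp [hω]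
  rw [h_eq]
  refine condExp_mul_of_stronglyMeasurable_right hg ?_ ((integrable_const 1).indicator hC)
  exact h_eq ▸ hg_int.indicator hC

end MeasureTheory

namespace ProbabilityTheory

section CondIndep

variable {Ω : Type*} {m m₁ m₂ m₃ mΩ : MeasurableSpace Ω} [StandardBorelSpace Ω] {μ : Measure Ω}
  [IsFiniteMeasure μ]

theorem CondIndep.condExp_sup_ae_eq (hm : m ≤ mΩ) (hm₁ : m₁ ≤ mΩ) (hm₂ : m₂ ≤ mΩ)
    (h : CondIndep m m₁ m₂ hm μ) {T : Set Ω} (hT : MeasurableSet[m₂] T) :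
    μ⟦T | m ⊔ m₁⟧ =ᵐ[μ] μ⟦T | m⟧ := by
  rw [condIndep_iff _ _ _ hm hm₁ hm₂] at h
  have hm_sup : m ⊔ m₁ ≤ mΩ := sup_le hm hm₁
  have hT' : MeasurableSet T := hm₂ T hT
  refine (ae_eq_condExp_of_forall_setIntegral_eq hm_sup
    ((integrable_const 1).indicator hT') (fun s _ _ ↦ integrable_condExp.integrableOn)
    (fun s hs _ ↦ ?_)
    (stronglyMeasurable_condExp.mono (le_sup_left : m ≤ m ⊔ m₁)).aestronglyMeasurable).symm
  refine setIntegral_eq_setIntegral_of_isPiSystem hm_sup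
    (MeasurableSpace.generateFrom_image2_inter m m₁).symm
    (MeasurableSpace.isPiSystem_image2_inter m m₁) integrable_condExp
    ((integrable_const 1).indicator hT') (integral_condExp hm) ?_ hs
  rintro _ ⟨B, hB, C, hC, rfl⟩
  have hC' : MeasurableSet C := hm₁ C hC
  calc ∫ ω in B ∩ C, (μ⟦T | m⟧) ω ∂μ
      = ∫ ω in B, C.indicator (μ⟦T | m⟧) ω ∂μ := (setIntegral_indicator hC').symm
    _ = ∫ ω in B, μ[C.indicator (μ⟦T | m⟧) | m] ω ∂μ :=
        (setIntegral_condExp hm (integrable_condExp.indicator hC') hB).symm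
    _ = ∫ ω in B, (μ⟦C | m⟧ * μ⟦T | m⟧) ω ∂μ :=
        integral_congr_ae (ae_restrict_of_ae (condExp_indicator_ae_eq_condExp_mul
          stronglyMeasurable_condExp integrable_condExp hC'))
    _ = ∫ ω in B, (μ⟦C ∩ T | m⟧) ω ∂μ := integral_congr_ae (ae_restrict_of_ae (h C T hC hT).symm)
    _ = ∫ ω in B, (C ∩ T).indicator (fun _ ↦ (1 : ℝ)) ω ∂μ :=
        setIntegral_condExp hm ((integrable_const 1).indicator (hC'.inter hT')) hB
    _ = ∫ ω in B ∩ C, T.indicator (fun _ ↦ (1 : ℝ)) ω ∂μ := by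
        rw [setIntegral_indicator (hC'.inter hT'), setIntegral_indicator hT', Set.inter_assoc]

theorem condIndep_of_condExp_sup_ae_eq (hm : m ≤ mΩ) (hm₁ : m₁ ≤ mΩ) (hm₂ : m₂ ≤ mΩ)
    (h : ∀ T, MeasurableSet[m₂] T → μ⟦T | m ⊔ m₁⟧ =ᵐ[μ] μ⟦T | m⟧) :
    CondIndep m m₁ m₂ hm μ := by
  refine (condIndep_iff _ _ _ hm hm₁ hm₂ μ).2 fun S T hS hT ↦ ?_
  have h_sup : μ⟦S ∩ T | m ⊔ m₁⟧ =ᵐ[μ] S.indicator (μ⟦T | m⟧) := by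
    rw [← Set.indicator_indicator]
    exact (condExp_indicator ((integrable_const 1).indicator (hm₂ T hT))
      (le_sup_right (a := m) S hS)).trans (h T hT).indicator
  calc μ⟦S ∩ T | m⟧
      =ᵐ[μ] μ[μ⟦S ∩ T | m ⊔ m₁⟧ | m] := (condExp_condExp_of_le le_sup_left (sup_le hm hm₁)).symm
    _ =ᵐ[μ] μ[S.indicator (μ⟦T | m⟧) | m] := condExp_congr_ae h_sup
    _ =ᵐ[μ] μ⟦S | m⟧ * μ⟦T | m⟧ :=
        condExp_indicator_ae_eq_condExp_mul stronglyMeasurable_condExp integrable_condExp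
          (hm₁ S hS)

theorem CondIndep.weak_union (hm : m ≤ mΩ) (hm₁ : m₁ ≤ mΩ) (hm₂ : m₂ ≤ mΩ) (hm₃ : m₃ ≤ mΩ)
    (h : CondIndep m (m₁ ⊔ m₂) m₃ hm μ) : CondIndep (m ⊔ m₁) m₂ m₃ (sup_le hm hm₁) μ := by
  refine condIndep_of_condExp_sup_ae_eq _ hm₂ hm₃ fun T hT ↦ ?_
  rw [sup_assoc]
  exact (h.condExp_sup_ae_eq hm (sup_le hm₁ hm₂) hm₃ hT).trans
    ((condIndep_of_condIndep_of_le_left h le_sup_left).condExp_sup_ae_eq hm hm₁ hm₃ hT).symm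

end CondIndep

section CondIndepFun

variable {Ω : Type*} {m mΩ : MeasurableSpace Ω} [StandardBorelSpace Ω] {μ : Measure Ω}
  [IsFiniteMeasure μ] {β β' γ δ : Type*} [mβ : MeasurableSpace β] [mβ' : MeasurableSpace β']
  [MeasurableSpace γ] [mδ : MeasurableSpace δ]

theorem CondIndepFun.congr {hm : m ≤ mΩ} {f f' : Ω → β} {g g' : Ω → β'}
    (hfg : CondIndepFun m hm f g μ) (hf : f =ᵐ[μ] f') (hg : g =ᵐ[μ] g') :
    CondIndepFun m hm f' g' μ := by
  have h_ae {p : Ω → Prop} (h : ∀ᵐ ω ∂μ, p ω) :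
      ∀ᵐ ω ∂(μ.trim hm), ∀ᵐ ω' ∂(condExpKernel μ m ω), p ω' :=
    Measure.ae_ae_of_ae_comp ((condExpKernel_comp_trim (μ := μ) hm).symm ▸ h)
  exact Kernel.IndepFun.congr' hfg (h_ae hf) (h_ae hg)

theorem CondIndepFun.weak_union {k : Ω → δ} {f : Ω → β} {g : Ω → β'} {h : Ω → γ}
    (hk : Measurable k) (hf : Measurable f) (hg : Measurable g) (hh : Measurable h)
    (hfgh : CondIndepFun (mδ.comap k) hk.comap_le (fun ω ↦ (f ω, g ω)) h μ) :
    CondIndepFun (MeasurableSpace.comap (fun ω ↦ (k ω, f ω)) inferInstance)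
      (hk.prodMk hf).comap_le g h μ := by
  rw [condIndepFun_iff_condIndep] at hfgh ⊢
  rw [show MeasurableSpace.comap (fun ω ↦ (f ω, g ω)) inferInstance = mβ.comap f ⊔ mβ'.comap g
    from MeasurableSpace.comap_prodMk f g] at hfgh
  convert hfgh.weak_union hk.comap_le hf.comap_le hg.comap_le hh.comap_le using 1
  exact MeasurableSpace.comap_prodMk k f

end CondIndepFun

end ProbabilityTheory

theorem prop1_general {Ω : Type*} [mΩ : MeasurableSpace Ω] [StandardBorelSpace Ω]
    (μ : Measure Ω) [IsProbabilityMeasure μ] {d : ℕ}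
    (X : Ω → (Fin d → ℝ)) (A Z : Ω → ℝ) (Y Y₁ Y₀ : Ω → ℝ)
    (hX : Measurable X) (hA : Measurable A) (hZ : Measurable Z)
    (hY : Measurable Y)
    (hcons : ∀ᵐ ω ∂μ, Y ω = A ω * Y₁ ω + (1 - A ω) * Y₀ ω)
    (hCI : CondIndepFun (MeasurableSpace.comap X inferInstance) hX.comap_le
      (fun ω => (Y₁ ω, Y₀ ω, A ω)) Z μ) :
    CondIndepFun (MeasurableSpace.comap (fun ω => (X ω, A ω)) inferInstance)
      (Measurable.comap_le (hX.prodMk hA)) Y Z μ := by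
  have h_obs : (fun ω ↦ (A ω, Y ω)) =ᵐ[μ]
      (fun p : ℝ × ℝ × ℝ ↦ (p.2.2, p.2.2 * p.1 + (1 - p.2.2) * p.2.1)) ∘
        (fun ω ↦ (Y₁ ω, Y₀ ω, A ω)) := by
    filter_upwards [hcons] with ω hω
    simp [hω]
  have h_pair : CondIndepFun (MeasurableSpace.comap X inferInstance) hX.comap_le
      (fun ω ↦ (A ω, Y ω)) Z μ :=
    (hCI.comp (by fun_prop) measurable_id).congr h_obs.symm Filter.EventuallyEq.rfl
  exact h_pair.weak_union hX hA hY hZ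

/-- **Proposition 1** (case `X_s = X`): if `(Y₁, Y₀, A)` is conditionally independent of the
negative control exposure `Z` given `σ(X)`, and the observed outcome satisfies consistency
`Y = A·Y₁ + (1−A)·Y₀` a.s., then `Y` is conditionally independent of `Z` given `σ(X, A)`. -/
theorem prop1 {Ω : Type*} [mΩ : MeasurableSpace Ω] [StandardBorelSpace Ω] [Nonempty Ω]
    (μ : Measure Ω) [IsProbabilityMeasure μ] {d : ℕ}
    (X : Ω → (Fin d → ℝ)) (A Z : Ω → ℝ) (Y Y₁ Y₀ : Ω → ℝ)
    (hX : Measurable X) (hA : Measurable A) (hZ : Measurable Z)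
    (hY : Measurable Y) (hY₁ : Measurable Y₁) (hY₀ : Measurable Y₀)
    (hAbin : ∀ ω, A ω = 0 ∨ A ω = 1) (hZbin : ∀ ω, Z ω = 0 ∨ Z ω = 1)
    (hcons : ∀ᵐ ω ∂μ, Y ω = A ω * Y₁ ω + (1 - A ω) * Y₀ ω)
    (hCI : CondIndepFun (MeasurableSpace.comap X inferInstance) hX.comap_le
      (fun ω => (Y₁ ω, Y₀ ω, A ω)) Z μ) :
    CondIndepFun (MeasurableSpace.comap (fun ω => (X ω, A ω)) inferInstance)
      (Measurable.comap_le (hX.prodMk hA)) Y Z μ :=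
  prop1_general (mΩ := mΩ) μ X A Z Y Y₁ Y₀ hX hA hZ hY hcons hCI
end

section
/- Let (Ω, 𝓕, ℙ) be a standard Borel probability space, let X_s : Ω → ℝ^d be measurable, let A, Z : Ω → {0,1} be measurable with ℙ(A = 0) > 0, and let Y, Y₀ : Ω → ℝ be measurable with Y = Y₀ almost surely on the event {A = 0} (consistency). Assume: (i) Y₀ is conditionally independent of A given σ(X_s) (partial exchangeability); (ii) Y₀ is conditionally independent of Z given the σ-algebra σ(X_s, A); and (iii) A is conditionally independent of Z given σ(X_s). Then, under the conditional probability measure ℙ[· | A = 0] := ℙ(· ∩ {A = 0}) / ℙ(A = 0), the observed outcome Y is conditionally independent of Z given σ(X_s). (This is Proposition 2 of the paper: if an adjustment set X_s is sufficient for partial exchangeability in the full study population, then adjustment for X_s renders the observed outcome independent of a negative control exposure Z within the unexposed population.) -/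
/-!
Restricted to the unexposed, `σ(X_s, A)` collapses to `σ(X_s)` up to null sets, because `A` is
a.s. constant there; and conditioning on an event of the conditioning σ-algebra does not change
conditional expectations given it. So `Y₀ ⊥⊥ Z | σ(X_s, A)` becomes `Y₀ ⊥⊥ Z | σ(X_s)` under
`ℙ[· | A = 0]`, and consistency replaces `Y₀` by `Y`, which agrees with it a.s. under that measure.
-/

open MeasureTheory ProbabilityTheory Filter

namespace ProbabilityTheory

variable {Ω : Type*} {m' m mΩ : MeasurableSpace Ω} {μ : Measure Ω}

theorem condExp_cond_ae_eq [IsFiniteMeasure μ] (hm : m ≤ mΩ) {B : Set Ω}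
    (hB : MeasurableSet[m] B) {f : Ω → ℝ} (hf : Integrable f μ) :
    (μ[|B])[f | m] =ᵐ[μ[|B]] μ[f | m] := by
  by_cases hμB : μ B = 0
  · simp [cond_eq_zero_of_meas_eq_zero hμB, EventuallyEq]
  have hc : (μ B)⁻¹ ≠ ⊤ := ENNReal.inv_ne_top.2 hμB
  have hintegrable {g : Ω → ℝ} (hg : Integrable g μ) : Integrable g μ[|B] :=
    hg.restrict.smul_measure hc
  refine (ae_eq_condExp_of_forall_setIntegral_eq hm (hintegrable hf)
    (fun _ _ _ => (hintegrable integrable_condExp).integrableOn) (fun t ht _ => ?_)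
    stronglyMeasurable_condExp.aestronglyMeasurable).symm
  simp only [ProbabilityTheory.cond, Measure.restrict_smul, integral_smul_measure,
    Measure.restrict_restrict (hm _ ht)]
  rw [setIntegral_condExp hm hf (ht.inter hB)]

theorem condExp_ae_eq_condExp_of_forall_exists_ae_eq [IsFiniteMeasure μ]
    (hm : m ≤ mΩ) (hm' : m' ≤ m)
    (hae : ∀ s, MeasurableSet[m] s → ∃ u, MeasurableSet[m'] u ∧ u =ᵐ[μ] s)
    {f : Ω → ℝ} (hf : Integrable f μ) :
    μ[f | m] =ᵐ[μ] μ[f | m'] := by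
  refine (ae_eq_condExp_of_forall_setIntegral_eq hm hf
    (fun _ _ _ => integrable_condExp.integrableOn) (fun s hs _ => ?_)
    (stronglyMeasurable_condExp.mono hm').aestronglyMeasurable).symm
  obtain ⟨u, hu, hus⟩ := hae s hs
  rw [← setIntegral_congr_set hus, ← setIntegral_congr_set hus,
    setIntegral_condExp (hm'.trans hm) hf hu]

variable [StandardBorelSpace Ω] {hm : m ≤ mΩ} {β γ : Type*} [MeasurableSpace β]
  [MeasurableSpace γ] {f f' : Ω → β} {g : Ω → γ}

theorem CondIndepFun.cond [IsFiniteMeasure μ] (h : CondIndepFun m hm f g μ)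
    (hf : Measurable f) (hg : Measurable g) {B : Set Ω} (hB : MeasurableSet[m] B) :
    CondIndepFun m hm f g μ[|B] := by
  rw [condIndepFun_iff _ _ _ _ hf hg] at h ⊢
  intro s t hs ht
  have hcondExp {E : Set Ω} (hE : MeasurableSet E) :
      μ[|B]⟦E | m⟧ =ᵐ[μ[|B]] μ⟦E | m⟧ :=
    condExp_cond_ae_eq hm hB ((integrable_const 1).indicator hE)
  filter_upwards [hcondExp ((hf.comap_le s hs).inter (hg.comap_le t ht)),
    hcondExp (hf.comap_le s hs), hcondExp (hg.comap_le t ht),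
    cond_absolutelyContinuous.ae_le (h s t hs ht)] with ω hst hs ht h
  simp only [Pi.mul_apply] at h ⊢
  rw [hst, hs, ht, h]

theorem CondIndepFun.of_forall_exists_ae_eq {hm' : m' ≤ mΩ}
    [IsFiniteMeasure μ] (h : CondIndepFun m hm f g μ) (hf : Measurable f) (hg : Measurable g)
    (hle : m' ≤ m) (hae : ∀ s, MeasurableSet[m] s → ∃ u, MeasurableSet[m'] u ∧ u =ᵐ[μ] s) :
    CondIndepFun m' hm' f g μ := by
  rw [condIndepFun_iff _ _ _ _ hf hg] at h ⊢
  intro s t hs ht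
  have hcondExp {E : Set Ω} (hE : MeasurableSet E) : μ⟦E | m⟧ =ᵐ[μ] μ⟦E | m'⟧ :=
    condExp_ae_eq_condExp_of_forall_exists_ae_eq hm hle hae ((integrable_const 1).indicator hE)
  filter_upwards [hcondExp ((hf.comap_le s hs).inter (hg.comap_le t ht)),
    hcondExp (hf.comap_le s hs), hcondExp (hg.comap_le t ht), h s t hs ht]
    with ω hst hs ht h
  simp only [Pi.mul_apply] at h ⊢
  rw [← hst, ← hs, ← ht, h]

theorem CondIndepFun.congr_left [IsFiniteMeasure μ] (h : CondIndepFun m hm f g μ)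
    (hff' : f =ᵐ[μ] f') : CondIndepFun m hm f' g μ :=
  Kernel.IndepFun.congr' h
    (Measure.ae_ae_of_ae_comp (by rwa [condExpKernel_comp_trim]))
    (ae_of_all _ fun _ => EventuallyEq.rfl)

end ProbabilityTheory

theorem MeasurableSpace.exists_comap_ae_eq_of_ae_eq_const {Ω α β : Type*} [MeasurableSpace α]
    [MeasurableSpace β] {mΩ : MeasurableSpace Ω} {μ : Measure Ω} {X : Ω → α} {A : Ω → β} {a : β}
    (hA : ∀ᵐ ω ∂μ, A ω = a) {s : Set Ω}
    (hs : MeasurableSet[MeasurableSpace.comap (fun ω => (X ω, A ω)) inferInstance] s) :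
    ∃ u, MeasurableSet[MeasurableSpace.comap X inferInstance] u ∧ u =ᵐ[μ] s := by
  obtain ⟨v, hv, rfl⟩ := hs
  refine ⟨X ⁻¹' {x | (x, a) ∈ v}, ⟨_, measurable_prodMk_right hv, rfl⟩, ?_⟩
  filter_upwards [hA] with ω hω
  change ((X ω, a) ∈ v) = ((X ω, A ω) ∈ v)
  rw [hω]

theorem prop2_general {Ω : Type*} [mΩ : MeasurableSpace Ω] [StandardBorelSpace Ω] [Nonempty Ω]
    (μ : Measure Ω) [IsProbabilityMeasure μ] {d : ℕ}
    (Xs : Ω → (Fin d → ℝ)) (A Z : Ω → ℝ) (Y Y₀ : Ω → ℝ)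
    (hXs : Measurable Xs) (hA : Measurable A) (hZ : Measurable Z)
    (hY₀ : Measurable Y₀)
    (hcons : ∀ᵐ ω ∂μ, A ω = 0 → Y ω = Y₀ ω)
    (hNC₂ : CondIndepFun (MeasurableSpace.comap (fun ω => (Xs ω, A ω)) inferInstance)
      (Measurable.comap_le (hXs.prodMk hA)) Y₀ Z μ) :
    CondIndepFun (MeasurableSpace.comap Xs inferInstance) hXs.comap_le Y Z
      (μ[|{ω | A ω = 0}]) := by
  have hXsA := comap_measurable (m := inferInstance) fun ω => (Xs ω, A ω)
  have hB : MeasurableSet[MeasurableSpace.comap (fun ω => (Xs ω, A ω)) inferInstance]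
      {ω | A ω = 0} :=
    (measurable_snd.comp hXsA) (measurableSet_singleton 0)
  have hA₀ : ∀ᵐ ω ∂μ[|{ω | A ω = 0}], A ω = 0 := ae_cond_mem (hA (measurableSet_singleton 0))
  have hYY₀ : Y₀ =ᵐ[μ[|{ω | A ω = 0}]] Y := by
    filter_upwards [hA₀, cond_absolutelyContinuous.ae_le hcons] with ω hω h using (h hω).symm
  exact ((hNC₂.cond hY₀ hZ hB).of_forall_exists_ae_eq hY₀ hZ (measurable_fst.comp hXsA).comap_le
    fun _ => MeasurableSpace.exists_comap_ae_eq_of_ae_eq_const hA₀).congr_left hYY₀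

/-- **Proposition 2**: if partial exchangeability `Y₀ ⊥⊥ A | σ(X_s)` holds, `Y₀ ⊥⊥ Z | σ(X_s, A)`,
`A ⊥⊥ Z | σ(X_s)`, and consistency `Y = Y₀` a.s. on `{A = 0}` holds, then under the conditional
measure `ℙ[·|A=0]` the observed outcome `Y` is conditionally independent of `Z` given `σ(X_s)`. -/
theorem prop2 {Ω : Type*} [mΩ : MeasurableSpace Ω] [StandardBorelSpace Ω] [Nonempty Ω]
    (μ : Measure Ω) [IsProbabilityMeasure μ] {d : ℕ}
    (Xs : Ω → (Fin d → ℝ)) (A Z : Ω → ℝ) (Y Y₀ : Ω → ℝ)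
    (hXs : Measurable Xs) (hA : Measurable A) (hZ : Measurable Z)
    (hY : Measurable Y) (hY₀ : Measurable Y₀)
    (hAbin : ∀ ω, A ω = 0 ∨ A ω = 1) (hZbin : ∀ ω, Z ω = 0 ∨ Z ω = 1)
    (hA0 : 0 < μ {ω | A ω = 0})
    (hcons : ∀ᵐ ω ∂μ, A ω = 0 → Y ω = Y₀ ω)
    (hPE : CondIndepFun (MeasurableSpace.comap Xs inferInstance) hXs.comap_le Y₀ A μ)
    (hNC₂ : CondIndepFun (MeasurableSpace.comap (fun ω => (Xs ω, A ω)) inferInstance)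
      (Measurable.comap_le (hXs.prodMk hA)) Y₀ Z μ)
    (hNC₃ : CondIndepFun (MeasurableSpace.comap Xs inferInstance) hXs.comap_le A Z μ) :
    CondIndepFun (MeasurableSpace.comap Xs inferInstance) hXs.comap_le Y Z
      (μ[|{ω | A ω = 0}]) :=
  prop2_general (mΩ := mΩ) μ Xs A Z Y Y₀ hXs hA hZ hY₀ hcons hNC₂
end
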